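/- arXiv:2603.26540 — 2 statements merged into one kernel-verified Lean document; each statement's English description precedes it below -/
import Mathlib

section
/- Let ρ_A = ⊕_k p_k ρ̃_k and σ_A = ⊕_k q_k σ̃_k be block-diagonal density matrices, where (p_k), (q_k) are probability distributions and ρ̃_k, σ̃_k are density matrices on the k-th block. Define D = ½‖ρ_A − σ_A‖₁, D_prob = ½ Σ_k |p_k − q_k|, and D_conf = ½ Σ_k q_k ‖ρ̃_k − σ̃_k‖₁. Then D_prob ≤ D ≤ D_prob + D_conf. -/
/-!
The trace norm is additive over blocks, so both bounds reduce to a single block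
`pρ - qσ`. For a Hermitian `A` and a unitary `U`, the diagonal of `U⋆ A U` is a doubly
stochastic average of the eigenvalues of `A`, so its `ℓ¹` norm is at most
`∑ |λᵢ| = ‖A‖₁`. Taking `U = 1` gives `|p - q| = |Tr (pρ - qσ)| ≤ ‖pρ - qσ‖₁`; taking for
`U` an eigenbasis of `A + B` gives the triangle inequality, which applied to
`pρ - qσ = (p - q)ρ + q(ρ - σ)` gives the upper bound.
-/

open Matrix Finset
open scoped ComplexOrder
open scoped MatrixOrder

/-- Trace norm (Schatten 1-norm) of a complex matrix: `‖A‖₁ = Tr √(Aᴴ A)`. -/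
noncomputable def traceNorm {n : Type*} [Fintype n] [DecidableEq n] (A : Matrix n n ℂ) : ℝ :=
  (((Matrix.posSemidef_conjTranspose_mul_self A).1.eigenvectorUnitary : Matrix n n ℂ) *
      diagonal ((RCLike.ofReal : ℝ → ℂ) ∘ (Real.sqrt ·) ∘
        (Matrix.posSemidef_conjTranspose_mul_self A).1.eigenvalues) *
      (star (Matrix.posSemidef_conjTranspose_mul_self A).1.eigenvectorUnitary : Matrix n n ℂ)).trace.re

section TraceNorm

variable {n : Type*} [Fintype n] [DecidableEq n]

lemma Matrix.sum_normSq_apply_eq_one_of_mem_unitaryGroup {W : Matrix n n ℂ}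
    (hW : W ∈ unitaryGroup n ℂ) (j : n) : ∑ i, Complex.normSq (W j i) = 1 := by
  have h := congrFun (congrFun (mem_unitaryGroup_iff.mp hW) j) j
  simp only [mul_apply, star_apply, one_apply_eq, Complex.star_def, Complex.mul_conj] at h
  exact_mod_cast h

lemma Matrix.conjTranspose_mul_diagonal_mul_apply_self (W : Matrix n n ℂ) (d : n → ℝ) (i : n) :
    (Wᴴ * diagonal (Complex.ofReal ∘ d) * W) i i =
      ∑ j, ((d j * Complex.normSq (W j i) : ℝ) : ℂ) := by
  rw [mul_apply]
  refine Finset.sum_congr rfl fun j _ => ?_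
  rw [mul_diagonal, conjTranspose_apply, Function.comp_apply, Complex.ofReal_mul,
    ← Complex.mul_conj, Complex.star_def]
  ring

lemma traceNorm_eq_re_trace_sqrt (A : Matrix n n ℂ) :
    traceNorm A = (CFC.sqrt (Aᴴ * A)).trace.re := by
  have hX := posSemidef_conjTranspose_mul_self A
  rw [CFC.sqrt_eq_cfc, cfc_nnreal_eq_real _ _ hX.nonneg, hX.1.cfc_eq, IsHermitian.cfc,
    Unitary.conjStarAlgAut_apply]
  have hf : ∀ x : ℝ, ((NNReal.sqrt x.toNNReal : NNReal) : ℝ) = Real.sqrt x :=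
    fun x => by rw [Real.sqrt]
  simp only [traceNorm, hf]

lemma traceNorm_eq_re_trace_of_sq_eq {A B : Matrix n n ℂ} (hB : B.PosSemidef)
    (h : B ^ 2 = Aᴴ * A) : traceNorm A = B.trace.re := by
  rw [traceNorm_eq_re_trace_sqrt, (CFC.sqrt_eq_iff _ _
    (posSemidef_conjTranspose_mul_self A).nonneg hB.nonneg).mpr (by rw [← pow_two, h])]

lemma Matrix.PosSemidef.traceNorm_eq {A : Matrix n n ℂ} (hA : A.PosSemidef) :
    traceNorm A = A.trace.re :=
  traceNorm_eq_re_trace_of_sq_eq hA (by rw [hA.1, pow_two])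

lemma traceNorm_real_smul (c : ℝ) (A : Matrix n n ℂ) :
    traceNorm (c • A) = |c| * traceNorm A := by
  set S := CFC.sqrt (Aᴴ * A) with hS
  have hcS : (|c| • S).PosSemidef :=
    (nonneg_iff_posSemidef.mp (CFC.sqrt_nonneg _)).smul (abs_nonneg c)
  have hsq : (|c| • S) ^ 2 = (c • A)ᴴ * (c • A) := by
    rw [conjTranspose_smul, star_trivial, smul_mul, Matrix.mul_smul, smul_smul, smul_pow, sq_abs,
      hS, CFC.sq_sqrt _ (posSemidef_conjTranspose_mul_self A).nonneg, ← pow_two]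
  rw [traceNorm_eq_re_trace_of_sq_eq hcS hsq, trace_smul, Complex.real_smul,
    Complex.re_ofReal_mul, traceNorm_eq_re_trace_sqrt]

lemma Matrix.IsHermitian.traceNorm_eq_sum_abs_eigenvalues {A : Matrix n n ℂ}
    (hA : A.IsHermitian) : traceNorm A = ∑ i, |hA.eigenvalues i| := by
  set U : Matrix n n ℂ := (hA.eigenvectorUnitary : Matrix n n ℂ)
  have hUU : Uᴴ * U = 1 := mem_unitaryGroup_iff'.mp hA.eigenvectorUnitary.2
  have sandwich : ∀ D E : Matrix n n ℂ, (U * D * Uᴴ) * (U * E * Uᴴ) = U * (D * E) * Uᴴ :=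
    fun D E => by simp only [Matrix.mul_assoc, ← Matrix.mul_assoc Uᴴ U, hUU, Matrix.one_mul]
  have hAeq : A = U * diagonal (Complex.ofReal ∘ hA.eigenvalues) * Uᴴ := hA.spectral_theorem
  set B := U * diagonal (fun i => ((|hA.eigenvalues i| : ℝ) : ℂ)) * Uᴴ
  have hB : B.PosSemidef := (PosSemidef.diagonal fun i =>
    Complex.zero_le_real.2 (abs_nonneg _)).mul_mul_conjTranspose_same U
  have hsq : B ^ 2 = Aᴴ * A := by
    rw [hA.eq]
    conv_rhs => rw [hAeq]
    rw [pow_two, sandwich, sandwich, diagonal_mul_diagonal, diagonal_mul_diagonal]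
    simp only [Function.comp_apply, ← Complex.ofReal_mul, abs_mul_abs_self]
  rw [traceNorm_eq_re_trace_of_sq_eq hB hsq, trace_mul_cycle, hUU, Matrix.one_mul,
    trace_diagonal, Complex.re_sum]
  simp

lemma Matrix.IsHermitian.sum_norm_diag_conj_le_traceNorm {A : Matrix n n ℂ}
    (hA : A.IsHermitian) {U : Matrix n n ℂ} (hU : U ∈ unitaryGroup n ℂ) :
    ∑ i, ‖(star U * A * U) i i‖ ≤ traceNorm A := by
  set V : Matrix n n ℂ := (hA.eigenvectorUnitary : Matrix n n ℂ)
  set W := star V * U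
  have hW : W ∈ unitaryGroup n ℂ := mul_mem (Unitary.star_mem hA.eigenvectorUnitary.2) hU
  have hconj : star U * A * U = Wᴴ * diagonal (Complex.ofReal ∘ hA.eigenvalues) * W := by
    conv_lhs => rw [hA.spectral_theorem]
    simp only [W, V, Unitary.conjStarAlgAut_apply, ← star_eq_conjTranspose, star_mul, star_star,
      Matrix.mul_assoc]
    rfl
  calc ∑ i, ‖(star U * A * U) i i‖
      ≤ ∑ i, ∑ j, |hA.eigenvalues j| * Complex.normSq (W j i) := by
        refine Finset.sum_le_sum fun i _ => ?_
        rw [hconj, conjTranspose_mul_diagonal_mul_apply_self]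
        refine (norm_sum_le _ _).trans_eq (Finset.sum_congr rfl fun j _ => ?_)
        rw [Complex.norm_real, Real.norm_eq_abs, abs_mul, abs_of_nonneg (Complex.normSq_nonneg _)]
    _ = ∑ j, |hA.eigenvalues j| := by
        rw [Finset.sum_comm]
        simp only [← Finset.mul_sum, sum_normSq_apply_eq_one_of_mem_unitaryGroup hW, mul_one]
    _ = traceNorm A := hA.traceNorm_eq_sum_abs_eigenvalues.symm

lemma Matrix.IsHermitian.norm_trace_le_traceNorm {A : Matrix n n ℂ} (hA : A.IsHermitian) :
    ‖A.trace‖ ≤ traceNorm A := by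
  simpa [trace] using (norm_sum_le _ _).trans (hA.sum_norm_diag_conj_le_traceNorm (one_mem _))

lemma Matrix.IsHermitian.traceNorm_add_le {A B : Matrix n n ℂ} (hA : A.IsHermitian)
    (hB : B.IsHermitian) : traceNorm (A + B) ≤ traceNorm A + traceNorm B := by
  have hAB : (A + B).IsHermitian := hA.add hB
  set U : Matrix n n ℂ := (hAB.eigenvectorUnitary : Matrix n n ℂ)
  have hU : U ∈ unitaryGroup n ℂ := hAB.eigenvectorUnitary.2
  have hdiag : star U * (A + B) * U = diagonal (Complex.ofReal ∘ hAB.eigenvalues) := by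
    have h := hAB.conjStarAlgAut_star_eigenvectorUnitary
    rwa [Unitary.conjStarAlgAut_star_apply] at h
  calc traceNorm (A + B) = ∑ i, ‖(star U * (A + B) * U) i i‖ := by
        simp [hAB.traceNorm_eq_sum_abs_eigenvalues, hdiag]
    _ ≤ ∑ i, (‖(star U * A * U) i i‖ + ‖(star U * B * U) i i‖) := by
        refine Finset.sum_le_sum fun i _ => ?_
        rw [Matrix.mul_add, Matrix.add_mul]
        exact norm_add_le _ _
    _ ≤ traceNorm A + traceNorm B := by
        rw [Finset.sum_add_distrib]
        exact add_le_add (hA.sum_norm_diag_conj_le_traceNorm hU)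
          (hB.sum_norm_diag_conj_le_traceNorm hU)

lemma abs_sub_le_traceNorm_smul_sub_smul (p q : ℝ) {ρ σ : Matrix n n ℂ}
    (hρ : ρ.IsHermitian) (hσ : σ.IsHermitian) (hρ1 : ρ.trace = 1) (hσ1 : σ.trace = 1) :
    |p - q| ≤ traceNorm (p • ρ - q • σ) := by
  have hM : (p • ρ - q • σ).IsHermitian :=
    (hρ.smul (IsSelfAdjoint.all p)).sub (hσ.smul (IsSelfAdjoint.all q))
  have htr : (p • ρ - q • σ).trace = ((p - q : ℝ) : ℂ) := by
    simp [trace_sub, trace_smul, hρ1, hσ1, Complex.real_smul]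
  simpa only [htr, Complex.norm_real, Real.norm_eq_abs] using hM.norm_trace_le_traceNorm

lemma traceNorm_smul_sub_smul_le (p : ℝ) {q : ℝ} (hq : 0 ≤ q) {ρ σ : Matrix n n ℂ}
    (hρ : ρ.PosSemidef) (hσ : σ.IsHermitian) (hρ1 : ρ.trace = 1) :
    traceNorm (p • ρ - q • σ) ≤ |p - q| + q * traceNorm (ρ - σ) := by
  have hsplit : p • ρ - q • σ = (p - q) • ρ + q • (ρ - σ) := by module
  calc traceNorm (p • ρ - q • σ)
      ≤ traceNorm ((p - q) • ρ) + traceNorm (q • (ρ - σ)) := by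
        rw [hsplit]
        exact (hρ.1.smul (IsSelfAdjoint.all _)).traceNorm_add_le
          ((hρ.1.sub hσ).smul (IsSelfAdjoint.all _))
    _ = |p - q| + q * traceNorm (ρ - σ) := by
        rw [traceNorm_real_smul, traceNorm_real_smul, hρ.traceNorm_eq, hρ1, abs_of_nonneg hq,
          Complex.one_re, mul_one]

end TraceNorm

section BlockDiagonal

variable {K : Type*} [Fintype K] [DecidableEq K] {ι : K → Type*} [∀ k, Fintype (ι k)]
  [∀ k, DecidableEq (ι k)]

lemma Matrix.posSemidef_blockDiagonal' {M : ∀ k, Matrix (ι k) (ι k) ℂ}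
    (hM : ∀ k, (M k).PosSemidef) : (blockDiagonal' M).PosSemidef := by
  choose C hC using fun k => CStarAlgebra.nonneg_iff_eq_star_mul_self.mp (hM k).nonneg
  rw [show M = fun k => (C k)ᴴ * C k from funext hC, blockDiagonal'_mul,
    ← blockDiagonal'_conjTranspose]
  exact posSemidef_conjTranspose_mul_self _

lemma traceNorm_blockDiagonal' (M : ∀ k, Matrix (ι k) (ι k) ℂ) :
    traceNorm (blockDiagonal' M) = ∑ k, traceNorm (M k) := by
  set S := fun k => CFC.sqrt ((M k)ᴴ * M k)
  have hS : (blockDiagonal' S).PosSemidef :=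
    posSemidef_blockDiagonal' fun k => nonneg_iff_posSemidef.mp (CFC.sqrt_nonneg _)
  have hsq : blockDiagonal' S ^ 2 = (blockDiagonal' M)ᴴ * blockDiagonal' M := by
    rw [pow_two, ← blockDiagonal'_mul, blockDiagonal'_conjTranspose, ← blockDiagonal'_mul]
    exact congrArg _ (funext fun k =>
      CFC.sqrt_mul_sqrt_self _ (posSemidef_conjTranspose_mul_self (M k)).nonneg)
  rw [traceNorm_eq_re_trace_of_sq_eq hS hsq, trace_blockDiagonal', Complex.re_sum]
  simp only [S, traceNorm_eq_re_trace_sqrt]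

end BlockDiagonal

theorem traceDist_prob_conf_bounds_general {K : Type*} [Fintype K] [DecidableEq K]
    {ι : K → Type*} [∀ k, Fintype (ι k)] [∀ k, DecidableEq (ι k)]
    (p q : K → ℝ) (ρt σt : ∀ k, Matrix (ι k) (ι k) ℂ)
    (hq : ∀ k, 0 ≤ q k)
    (hρ : ∀ k, (ρt k).PosSemidef ∧ (ρt k).trace = 1)
    (hσ : ∀ k, (σt k).PosSemidef ∧ (σt k).trace = 1) :
    (1 / 2) * ∑ k, |p k - q k| ≤
      (1 / 2) * traceNorm (Matrix.blockDiagonal' (fun k => p k • ρt k) -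
        Matrix.blockDiagonal' (fun k => q k • σt k)) ∧
    (1 / 2) * traceNorm (Matrix.blockDiagonal' (fun k => p k • ρt k) -
        Matrix.blockDiagonal' (fun k => q k • σt k)) ≤
      (1 / 2) * ∑ k, |p k - q k| + (1 / 2) * ∑ k, q k * traceNorm (ρt k - σt k) := by
  have hblocks : traceNorm (blockDiagonal' (fun k => p k • ρt k) -
      blockDiagonal' (fun k => q k • σt k)) = ∑ k, traceNorm (p k • ρt k - q k • σt k) := by
    rw [← blockDiagonal'_sub, traceNorm_blockDiagonal']
    rfl
  rw [hblocks, ← mul_add, ← Finset.sum_add_distrib]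
  constructor
  · gcongr with k
    exact abs_sub_le_traceNorm_smul_sub_smul _ _ (hρ k).1.1 (hσ k).1.1 (hρ k).2 (hσ k).2
  · gcongr with k
    exact traceNorm_smul_sub_smul_le _ (hq k) (hρ k).1 (hσ k).1.1 (hρ k).2

/-- Proposition 1: for block-diagonal density matrices `ρ_A = ⊕ₖ pₖ ρ̃ₖ` and
`σ_A = ⊕ₖ qₖ σ̃ₖ`, the trace distance `D = ½‖ρ_A − σ_A‖₁` satisfies
`D_prob ≤ D ≤ D_prob + D_conf` with `D_prob = ½ Σₖ |pₖ − qₖ|` and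
`D_conf = ½ Σₖ qₖ ‖ρ̃ₖ − σ̃ₖ‖₁`. -/
theorem traceDist_prob_conf_bounds {K : Type*} [Fintype K] [DecidableEq K]
    {ι : K → Type*} [∀ k, Fintype (ι k)] [∀ k, DecidableEq (ι k)]
    (p q : K → ℝ) (ρt σt : ∀ k, Matrix (ι k) (ι k) ℂ)
    (hp : ∀ k, 0 ≤ p k) (hq : ∀ k, 0 ≤ q k)
    (hp1 : ∑ k, p k = 1) (hq1 : ∑ k, q k = 1)
    (hρ : ∀ k, (ρt k).PosSemidef ∧ (ρt k).trace = 1)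
    (hσ : ∀ k, (σt k).PosSemidef ∧ (σt k).trace = 1) :
    (1 / 2) * ∑ k, |p k - q k| ≤
      (1 / 2) * traceNorm (Matrix.blockDiagonal' (fun k => p k • ρt k) -
        Matrix.blockDiagonal' (fun k => q k • σt k)) ∧
    (1 / 2) * traceNorm (Matrix.blockDiagonal' (fun k => p k • ρt k) -
        Matrix.blockDiagonal' (fun k => q k • σt k)) ≤
      (1 / 2) * ∑ k, |p k - q k| + (1 / 2) * ∑ k, q k * traceNorm (ρt k - σt k) :=
  traceDist_prob_conf_bounds_general p q ρt σt hq hρ hσ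
end

section
/- Combined exponential suppression bound: with the hypotheses of the previous two statements (P_k^{(α)} = T_k + ε Δ_k^{(α)}, m eigenstates, n sectors), the pair-averaged probability trace distance satisfies ⟨D_prob⟩ ≤ (m/(m−1)) · ε · √(n Σ_k Var(Δ_k^{(·)})). In particular, if ε = e^{−c·N} for some c > 0 and n Σ_k Var(Δ_k) grows at most polynomially in N, then ⟨D_prob⟩ → 0 exponentially as N → ∞. -/
/-!
Comparing consecutive states α, α + 1 the common part `T` cancels, so each summand of
`D_prob` is `ε / 2` times the ℓ¹ distance of `Δ^(α+1)` and `Δ^(α)`. Passing through the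
mean `μ` of the `Δ^(·)` and using `‖·‖₁ ≤ √n ‖·‖₂`, the pair sum is at most
`2 √n ∑_α ‖Δ^(α) − μ‖₂`, and a second Cauchy–Schwarz over α turns this into
`2 m √(n ∑ₖ Var Δₖ)`. With `ε = e^{−cN}` and polynomial growth of `n ∑ₖ Var Δₖ`,
the polynomial factor is absorbed by half of the exponential.
-/

open Finset Filter

noncomputable section

namespace ProbTraceDistance

variable {ι : Type*}

lemma sum_abs_le_sqrt_card_mul_sqrt_sum_sq (s : Finset ι) (f : ι → ℝ) :
    ∑ i ∈ s, |f i| ≤ √(#s : ℝ) * √(∑ i ∈ s, f i ^ 2) := by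
  rw [← Real.sqrt_mul (Nat.cast_nonneg _)]
  refine Real.le_sqrt_of_sq_le ?_
  calc (∑ i ∈ s, |f i|) ^ 2 ≤ #s * ∑ i ∈ s, |f i| ^ 2 := sq_sum_le_card_mul_sum_sq
    _ = #s * ∑ i ∈ s, f i ^ 2 := by simp only [sq_abs]

lemma sum_abs_sub_le_sqrt_card_mul [Fintype ι] (u v w : ι → ℝ) :
    ∑ k, |u k - v k| ≤
      √(Fintype.card ι : ℝ) * (√(∑ k, (u k - w k) ^ 2) + √(∑ k, (v k - w k) ^ 2)) := by
  calc ∑ k, |u k - v k| ≤ ∑ k, |u k - w k| + ∑ k, |v k - w k| := by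
        rw [← sum_add_distrib]
        refine sum_le_sum fun k _ => ?_
        simpa only [abs_sub_comm (v k)] using abs_sub_le (u k) (w k) (v k)
    _ ≤ _ := by
        rw [mul_add]
        exact add_le_add (sum_abs_le_sqrt_card_mul_sqrt_sum_sq _ _)
          (sum_abs_le_sqrt_card_mul_sqrt_sum_sq _ _)

lemma sum_range_pred_succ_add_le_two_mul_sum {a : ℕ → ℝ} (ha : ∀ α, 0 ≤ a α) (M : ℕ) :
    ∑ α ∈ range (M - 1), (a (α + 1) + a α) ≤ 2 * ∑ α ∈ range M, a α := by
  rcases M with _ | M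
  · simp
  rw [Nat.add_sub_cancel, sum_add_distrib]
  linarith [sum_range_succ' a M, sum_range_succ a M, ha 0, ha M]

def rangeMean (M : ℕ) (f : ℕ → ℝ) : ℝ :=
  (1 / (M : ℝ)) * ∑ β ∈ range M, f β

def rangeVariance (M : ℕ) (f : ℕ → ℝ) : ℝ :=
  (1 / (M : ℝ)) * ∑ α ∈ range M, (f α - rangeMean M f) ^ 2

lemma sum_range_sq_sub_rangeMean (M : ℕ) (f : ℕ → ℝ) :
    ∑ α ∈ range M, (f α - rangeMean M f) ^ 2 = M * rangeVariance M f := by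
  rcases eq_or_ne M 0 with rfl | hM
  · simp
  rw [rangeVariance, ← mul_assoc, mul_one_div_cancel (Nat.cast_ne_zero.mpr hM), one_mul]

/-- The paper's `D_prob` for the distributions `p 0, …, p (M - 1)`. -/
def pairAvgTraceDistance [Fintype ι] (M : ℕ) (p : ℕ → ι → ℝ) : ℝ :=
  (1 / ((M : ℝ) - 1)) * ∑ α ∈ range (M - 1), ((1 / 2) * ∑ k, |p (α + 1) k - p α k|)

section Fintype

variable [Fintype ι]

lemma sum_range_sqrt_dist_rangeMean_le (M : ℕ) (x : ℕ → ι → ℝ) :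
    ∑ α ∈ range M, √(∑ k, (x α k - rangeMean M (x · k)) ^ 2) ≤
      M * √(∑ k, rangeVariance M (x · k)) := by
  have hsq : ∑ α ∈ range M, √(∑ k, (x α k - rangeMean M (x · k)) ^ 2) ^ 2 =
      M * ∑ k, rangeVariance M (x · k) := by
    simp only [Real.sq_sqrt (sum_nonneg fun _ _ => sq_nonneg _)]
    rw [sum_comm, mul_sum]
    exact sum_congr rfl fun k _ => sum_range_sq_sub_rangeMean M (x · k)
  calc ∑ α ∈ range M, √(∑ k, (x α k - rangeMean M (x · k)) ^ 2)
      = ∑ α ∈ range M, |√(∑ k, (x α k - rangeMean M (x · k)) ^ 2)| :=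
        sum_congr rfl fun _ _ => (abs_of_nonneg (Real.sqrt_nonneg _)).symm
    _ ≤ √(M : ℝ) * √(M * ∑ k, rangeVariance M (x · k)) := by
        have h := sum_abs_le_sqrt_card_mul_sqrt_sum_sq (range M)
          fun α => √(∑ k, (x α k - rangeMean M (x · k)) ^ 2)
        rwa [card_range, hsq] at h
    _ = M * √(∑ k, rangeVariance M (x · k)) := by
        rw [Real.sqrt_mul (Nat.cast_nonneg _), ← mul_assoc,
          Real.mul_self_sqrt (Nat.cast_nonneg _)]

lemma sum_range_pred_sum_abs_sub_le (M : ℕ) (x : ℕ → ι → ℝ) :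
    ∑ α ∈ range (M - 1), ∑ k, |x (α + 1) k - x α k| ≤
      2 * M * √(Fintype.card ι * ∑ k, rangeVariance M (x · k)) := by
  set a : ℕ → ℝ := fun α => √(∑ k, (x α k - rangeMean M (x · k)) ^ 2)
  calc ∑ α ∈ range (M - 1), ∑ k, |x (α + 1) k - x α k|
      ≤ ∑ α ∈ range (M - 1), √(Fintype.card ι : ℝ) * (a (α + 1) + a α) :=
        sum_le_sum fun α _ => sum_abs_sub_le_sqrt_card_mul _ _ _
    _ ≤ √(Fintype.card ι : ℝ) * (2 * ∑ α ∈ range M, a α) := by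
        rw [← mul_sum]
        gcongr
        exact sum_range_pred_succ_add_le_two_mul_sum (a := a) (fun _ => Real.sqrt_nonneg _) M
    _ ≤ √(Fintype.card ι : ℝ) * (2 * (M * √(∑ k, rangeVariance M (x · k)))) := by
        gcongr
        exact sum_range_sqrt_dist_rangeMean_le M x
    _ = 2 * M * √(Fintype.card ι * ∑ k, rangeVariance M (x · k)) := by
        rw [Real.sqrt_mul (Nat.cast_nonneg _)]
        ring

lemma pairAvgTraceDistance_nonneg (M : ℕ) (p : ℕ → ι → ℝ) :
    0 ≤ pairAvgTraceDistance M p := by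
  rcases M with _ | M
  · simp [pairAvgTraceDistance]
  unfold pairAvgTraceDistance
  push_cast
  rw [add_sub_cancel_right]
  positivity

theorem pairAvgTraceDistance_le {M : ℕ} (hM : 1 ≤ M) {P T Δ : ℕ → ι → ℝ} {ε : ℝ}
    (hε : 0 ≤ ε)
    (hT : ∀ α ∈ range M, ∀ β ∈ range M, ∀ k, T α k = T β k)
    (hdec : ∀ α ∈ range M, ∀ k, P α k = T α k + ε * Δ α k) :
    pairAvgTraceDistance M P ≤
      (M / ((M : ℝ) - 1)) * ε * √(Fintype.card ι * ∑ k, rangeVariance M (Δ · k)) := by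
  have hstep : ∀ α ∈ range (M - 1),
      ∑ k, |P (α + 1) k - P α k| = ε * ∑ k, |Δ (α + 1) k - Δ α k| := by
    intro α hα
    have hα : α ∈ range M := mem_range.mpr (by grind)
    have hα1 : α + 1 ∈ range M := mem_range.mpr (by grind)
    rw [mul_sum]
    refine sum_congr rfl fun k _ => ?_
    rw [hdec _ hα1, hdec _ hα, hT _ hα1 _ hα, add_sub_add_left_eq_sub, ← mul_sub, abs_mul,
      abs_of_nonneg hε]
  have hM1 : (0 : ℝ) ≤ (M : ℝ) - 1 := by
    rw [sub_nonneg]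
    exact_mod_cast hM
  calc pairAvgTraceDistance M P
      = (1 / ((M : ℝ) - 1)) * (ε / 2) *
          ∑ α ∈ range (M - 1), ∑ k, |Δ (α + 1) k - Δ α k| := by
        rw [pairAvgTraceDistance, sum_congr rfl fun α hα => congrArg _ (hstep α hα),
          ← mul_sum, ← mul_sum]
        ring
    _ ≤ (1 / ((M : ℝ) - 1)) * (ε / 2) *
          (2 * M * √(Fintype.card ι * ∑ k, rangeVariance M (Δ · k))) := by
        gcongr
        exact sum_range_pred_sum_abs_sub_le M Δ
    _ = _ := by ring

end Fintype

lemma eventually_le_exp_neg_of_le_mul_rpow_mul_exp {D : ℕ → ℝ} {K p c : ℝ} (hc : 0 < c)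
    (hD : ∀ N : ℕ, D N ≤ K * ((N : ℝ) ^ p * Real.exp (-c * N))) :
    ∀ᶠ N : ℕ in atTop, D N ≤ Real.exp (-(c / 2) * N) := by
  have hsmall : ∀ᶠ N : ℕ in atTop, K * ((N : ℝ) ^ p * Real.exp (-(c / 2) * N)) < 1 := by
    have h := ((tendsto_rpow_mul_exp_neg_mul_atTop_nhds_zero p (c / 2) (half_pos hc)).comp
      tendsto_natCast_atTop_atTop).const_mul K
    rw [mul_zero] at h
    exact h.eventually_lt_const one_pos
  filter_upwards [hsmall] with N hN
  calc D N ≤ K * ((N : ℝ) ^ p * Real.exp (-c * N)) := hD N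
    _ = K * ((N : ℝ) ^ p * Real.exp (-(c / 2) * N)) * Real.exp (-(c / 2) * N) := by
        rw [mul_assoc, mul_assoc, ← Real.exp_add]
        ring_nf
    _ ≤ Real.exp (-(c / 2) * N) := mul_le_of_le_one_left (Real.exp_pos _).le hN.le

lemma sqrt_le_sqrt_mul_rpow_half {x C N d : ℝ} (hN : 0 ≤ N) (hx : x ≤ C * N ^ d) :
    √x ≤ √C * N ^ (d / 2) := by
  calc √x ≤ √(C * N ^ d) := Real.sqrt_le_sqrt hx
    _ = √C * N ^ (d / 2) := by
        rw [Real.sqrt_mul' _ (Real.rpow_nonneg hN d), Real.sqrt_eq_rpow (N ^ d),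
          ← Real.rpow_mul hN, mul_one_div]

end ProbTraceDistance

end

open ProbTraceDistance in
theorem prob_trace_distance_exponential_suppression_general
    (m n : ℕ → ℕ) (hm : ∀ N, 2 ≤ m N)
    (P T Δ : (N : ℕ) → ℕ → Fin (n N) → ℝ)
    (hT : ∀ N, ∀ α ∈ Finset.range (m N), ∀ β ∈ Finset.range (m N), ∀ k,
      T N α k = T N β k)
    (c : ℝ) (hc : 0 < c)
    (hdec : ∀ N, ∀ α ∈ Finset.range (m N), ∀ k,
      P N α k = T N α k + Real.exp (-c * N) * Δ N α k)
    (VarΔ : (N : ℕ) → Fin (n N) → ℝ)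
    (hVar : ∀ N k, VarΔ N k = (1 / (m N : ℝ)) * ∑ α ∈ Finset.range (m N),
      (Δ N α k - (1 / (m N : ℝ)) * ∑ β ∈ Finset.range (m N), Δ N β k) ^ 2)
    (C d : ℝ)
    (hpoly : ∀ N : ℕ, (n N : ℝ) * ∑ k, VarΔ N k ≤ C * (N : ℝ) ^ d)
    (Dprob : ℕ → ℝ)
    (hD : ∀ N, Dprob N = (1 / ((m N : ℝ) - 1)) * ∑ α ∈ Finset.range (m N - 1),
      ((1 / 2) * ∑ k, |P N (α + 1) k - P N α k|)) :
    (∀ N, Dprob N ≤ ((m N : ℝ) / ((m N : ℝ) - 1)) * Real.exp (-c * N) *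
        Real.sqrt ((n N : ℝ) * ∑ k, VarΔ N k)) ∧
    Tendsto Dprob atTop (nhds 0) ∧
    ∃ c' > 0, ∀ᶠ N : ℕ in atTop, Dprob N ≤ Real.exp (-c' * N) := by
  have hVar' : ∀ N, VarΔ N = fun k => rangeVariance (m N) (Δ N · k) := fun N => funext (hVar N)
  have hbound : ∀ N, Dprob N ≤ ((m N : ℝ) / ((m N : ℝ) - 1)) * Real.exp (-c * N) *
      √((n N : ℝ) * ∑ k, VarΔ N k) := fun N => by
    have h := pairAvgTraceDistance_le (by grind) (Real.exp_pos _).le (hT N) (hdec N)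
    rw [Fintype.card_fin] at h
    rw [hD N, hVar' N]
    exact h
  have hpolyexp :
      ∀ N : ℕ, Dprob N ≤ 2 * √C * ((N : ℝ) ^ (d / 2) * Real.exp (-c * N)) := by
    intro N
    have hM : (2 : ℝ) ≤ m N := by exact_mod_cast hm N
    have hratio : (m N : ℝ) / ((m N : ℝ) - 1) ≤ 2 := by
      rw [div_le_iff₀ (by linarith)]
      linarith
    calc Dprob N ≤ 2 * Real.exp (-c * N) * (√C * (N : ℝ) ^ (d / 2)) := by
          refine (hbound N).trans ?_
          gcongr
          exact sqrt_le_sqrt_mul_rpow_half (Nat.cast_nonneg N) (hpoly N)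
      _ = _ := by ring
  have hexp := eventually_le_exp_neg_of_le_mul_rpow_mul_exp hc hpolyexp
  have hDnn : ∀ N, 0 ≤ Dprob N := fun N => by
    rw [hD N]
    exact pairAvgTraceDistance_nonneg _ _
  refine ⟨hbound, ?_, c / 2, half_pos hc, hexp⟩
  refine squeeze_zero' (Eventually.of_forall hDnn) hexp ?_
  exact Real.tendsto_exp_atBot.comp
    (tendsto_natCast_atTop_atTop.const_mul_atTop_of_neg (by linarith))

/-- Combined exponential suppression bound (main quantitative conclusion of
Proposition 2 under the non-Abelian ETH).  For each system size `N` the window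
contains `m N` eigenstates and `n N` sectors, the sector probabilities decompose
as `P = T + ε Δ` with `ε N = e^{−cN}`, and `n Σₖ Var(Δₖ)` grows at most
polynomially.  Then the pair-averaged probability trace distance obeys
`⟨D_prob⟩ ≤ (m/(m−1)) ε √(n Σₖ Var Δₖ)` and decays to zero exponentially. -/
theorem prob_trace_distance_exponential_suppression
    (m n : ℕ → ℕ) (hm : ∀ N, 2 ≤ m N)
    (P T Δ : (N : ℕ) → ℕ → Fin (n N) → ℝ)
    (hT : ∀ N, ∀ α ∈ Finset.range (m N), ∀ β ∈ Finset.range (m N), ∀ k,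
      T N α k = T N β k)
    (c : ℝ) (hc : 0 < c)
    (hdec : ∀ N, ∀ α ∈ Finset.range (m N), ∀ k,
      P N α k = T N α k + Real.exp (-c * N) * Δ N α k)
    (VarΔ : (N : ℕ) → Fin (n N) → ℝ)
    (hVar : ∀ N k, VarΔ N k = (1 / (m N : ℝ)) * ∑ α ∈ Finset.range (m N),
      (Δ N α k - (1 / (m N : ℝ)) * ∑ β ∈ Finset.range (m N), Δ N β k) ^ 2)
    (C d : ℝ) (hC : 0 < C) (hd : 0 ≤ d)
    (hpoly : ∀ N : ℕ, (n N : ℝ) * ∑ k, VarΔ N k ≤ C * (N : ℝ) ^ d)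
    (Dprob : ℕ → ℝ)
    (hD : ∀ N, Dprob N = (1 / ((m N : ℝ) - 1)) * ∑ α ∈ Finset.range (m N - 1),
      ((1 / 2) * ∑ k, |P N (α + 1) k - P N α k|)) :
    (∀ N, Dprob N ≤ ((m N : ℝ) / ((m N : ℝ) - 1)) * Real.exp (-c * N) *
        Real.sqrt ((n N : ℝ) * ∑ k, VarΔ N k)) ∧
    Tendsto Dprob atTop (nhds 0) ∧
    ∃ c' > 0, ∀ᶠ N : ℕ in atTop, Dprob N ≤ Real.exp (-c' * N) :=
  prob_trace_distance_exponential_suppression_general m n hm P T Δ hT c hc hdec VarΔ hVar C d hpoly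
    Dprob hD
end
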